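/- arXiv:1707.09327 — 7 statements merged into one kernel-verified Lean document; each statement's English description precedes it below -/
import Mathlib

section
/- Let k ≥ 1 and m ≥ 2k+1 be natural numbers. For every consistent family of k signed edge conditions on Fin m, there exists a simple graph G on Fin m that satisfies every condition in the family and is 2-clique-colorable. (In the paper's terminology: the problem 2CC is (2k+1,k)-universal for every k ≥ 1.) -/
/-!
Every condition mentions at most two vertices, so `k` conditions on `2k + 1` vertices leave some
vertex `w` unmentioned. Joining `w` to every other vertex of a graph satisfying the conditions
changes no constrained pair, and makes `w` universal. A universal vertex lies in every maximal
clique, so colouring `w` alone `true` leaves no maximal clique with two vertices monochromatic.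
-/

/-- A set of vertices is a maximal clique if it is a clique and no strict
superset of it is a clique. -/
def IsMaximalClique {V : Type*} (G : SimpleGraph V) (s : Set V) : Prop :=
  G.IsClique s ∧ ∀ t : Set V, G.IsClique t → s ⊆ t → s = t

/-- A set of vertices is monochromatic under a 2-coloring `c` if `c` is
constant on it. -/
def MonochromaticOn {V : Type*} (c : V → Bool) (s : Set V) : Prop :=
  ∀ u ∈ s, ∀ v ∈ s, c u = c v

/-- `G` is 2-clique-colorable if some 2-coloring makes every maximal clique
with at least two vertices nonmonochromatic. -/
def TwoCliqueColorable {V : Type*} (G : SimpleGraph V) : Prop :=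
  ∃ c : V → Bool, ∀ s : Set V, IsMaximalClique G s →
    (∃ u ∈ s, ∃ v ∈ s, u ≠ v) → ¬ MonochromaticOn c s

/-- A graph `G` satisfies a signed edge condition `((u, v), sign)` if `u` and
`v` are adjacent when the sign is `true`, and nonadjacent when it is `false`. -/
def SatisfiesCond {m : ℕ} (G : SimpleGraph (Fin m)) (c : (Fin m × Fin m) × Bool) : Prop :=
  if c.2 = true then G.Adj c.1.1 c.1.2 else ¬ G.Adj c.1.1 c.1.2

namespace SimpleGraph

variable {V : Type*}

theorem isUniversal_sup_starGraph (G : SimpleGraph V) (w : V) :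
    (G ⊔ starGraph w).IsUniversal w :=
  fun _ hne => Or.inr (starGraph_adj.mpr ⟨hne, Or.inl rfl⟩)

theorem sup_starGraph_adj_of_ne {G : SimpleGraph V} {w u v : V} (hu : u ≠ w) (hv : v ≠ w) :
    (G ⊔ starGraph w).Adj u v ↔ G.Adj u v := by
  simp [starGraph_adj, hu, hv]

end SimpleGraph

theorem IsMaximalClique.mem_of_isUniversal {V : Type*} {G : SimpleGraph V} {s : Set V} {w : V}
    (hs : IsMaximalClique G s) (hw : G.IsUniversal w) : w ∈ s := by
  have hclique : G.IsClique (insert w s) := hs.1.insert fun _ _ hne => hw hne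
  rw [hs.2 _ hclique (Set.subset_insert w s)]
  exact Set.mem_insert w s

theorem twoCliqueColorable_of_isUniversal {V : Type*} {G : SimpleGraph V} {w : V}
    (hw : G.IsUniversal w) : TwoCliqueColorable G := by
  classical
  refine ⟨fun v => decide (v = w), ?_⟩
  rintro s hs ⟨u, hu, v, hv, huv⟩ hmono
  have hws : w ∈ s := hs.mem_of_isUniversal hw
  obtain ⟨x, hxs, hxw⟩ : ∃ x ∈ s, x ≠ w := by
    by_cases huw : u = w
    · exact ⟨v, hv, fun hvw => huv (huw.trans hvw.symm)⟩
    · exact ⟨u, hu, huw⟩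
  simpa [hxw] using hmono x hxs w hws

theorem satisfiesCond_sup_starGraph {m : ℕ} {G : SimpleGraph (Fin m)} {w : Fin m}
    {c : (Fin m × Fin m) × Bool} (h : SatisfiesCond G c) (hu : c.1.1 ≠ w) (hv : c.1.2 ≠ w) :
    SatisfiesCond (G ⊔ SimpleGraph.starGraph w) c := by
  simpa only [SatisfiesCond, SimpleGraph.sup_starGraph_adj_of_ne hu hv] using h

theorem exists_forall_ne_fst_and_ne_snd {ι V : Type*} [Fintype ι] [Fintype V] (p : ι → V × V)
    (h : 2 * Fintype.card ι < Fintype.card V) : ∃ w, ∀ i, (p i).1 ≠ w ∧ (p i).2 ≠ w := by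
  classical
  let ends : Finset V :=
    Finset.univ.image (fun i => (p i).1) ∪ Finset.univ.image (fun i => (p i).2)
  have hcard : ends.card < (Finset.univ : Finset V).card := calc
    ends.card ≤ Fintype.card ι + Fintype.card ι :=
      (Finset.card_union_le _ _).trans (add_le_add Finset.card_image_le Finset.card_image_le)
    _ < (Finset.univ : Finset V).card := by rw [Finset.card_univ]; omega
  obtain ⟨w, -, hw⟩ := Finset.exists_mem_notMem_of_card_lt_card hcard
  refine ⟨w, fun i => ⟨?_, ?_⟩⟩ <;> rintro rfl <;> simp [ends] at hw

theorem twoCC_universal_general (k m : ℕ) (hm : 2 * k + 1 ≤ m)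
    (cond : Fin k → (Fin m × Fin m) × Bool)
    (hcons : ∃ G : SimpleGraph (Fin m), ∀ i, SatisfiesCond G (cond i)) :
    ∃ G : SimpleGraph (Fin m),
      (∀ i, SatisfiesCond G (cond i)) ∧ TwoCliqueColorable G := by
  obtain ⟨G, hG⟩ := hcons
  obtain ⟨w, hw⟩ := exists_forall_ne_fst_and_ne_snd (fun i => (cond i).1) (by simpa using hm)
  exact ⟨G ⊔ SimpleGraph.starGraph w,
    fun i => satisfiesCond_sup_starGraph (hG i) (hw i).1 (hw i).2,
    twoCliqueColorable_of_isUniversal (G.isUniversal_sup_starGraph w)⟩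

/-- 2CC is (2k+1, k)-universal: any consistent family of k signed edge
conditions on `Fin m` (m ≥ 2k+1) has a model that is 2-clique-colorable. -/
theorem twoCC_universal (k m : ℕ) (hk : 1 ≤ k) (hm : 2 * k + 1 ≤ m)
    (cond : Fin k → (Fin m × Fin m) × Bool)
    (hcons : ∃ G : SimpleGraph (Fin m), ∀ i, SatisfiesCond G (cond i)) :
    ∃ G : SimpleGraph (Fin m),
      (∀ i, SatisfiesCond G (cond i)) ∧ TwoCliqueColorable G :=
  twoCC_universal_general k m hm cond hcons
end

section
/- Let k ≥ 1 and m ≥ 2k+5 be natural numbers. For every consistent family of k signed edge conditions on Fin m, there exists a simple graph G on Fin m that satisfies every condition in the family and is NOT 2-clique-colorable. (In the paper's terminology: the complement problem (2CC)^c is (2k+5,k)-universal for every k ≥ 1.) -/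
theorem monochromaticOn_pair {V : Type*} {c : V → Bool} {u v : V} (h : c u = c v) :
    MonochromaticOn c {u, v} := by
  rintro x (rfl | rfl) y (rfl | rfl) <;> simp [h]

theorem isMaximalClique_pair {V : Type*} {G : SimpleGraph V} {u v : V} (huv : G.Adj u v)
    (h : ∀ w, G.Adj u w → ¬ G.Adj v w) : IsMaximalClique G {u, v} := by
  refine ⟨SimpleGraph.isClique_pair.mpr fun _ => huv, fun t ht hsub => ?_⟩
  refine hsub.antisymm fun w hw => ?_
  by_contra hw'
  simp only [Set.mem_insert_iff, Set.mem_singleton_iff, not_or] at hw'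
  have hu : u ∈ t := hsub (by simp)
  have hv : v ∈ t := hsub (by simp)
  exact h w (ht hu hw (Ne.symm hw'.1)) (ht hv hw (Ne.symm hw'.2))

/-- Edges whose endpoints have no common neighbour are maximal cliques, so a 2-clique-coloring
must separate their endpoints. -/
theorem not_twoCliqueColorable_of_hom {V W : Type*} {G : SimpleGraph V} {H : SimpleGraph W}
    (φ : H →g G) (hφ : ∀ x y, H.Adj x y → ∀ w, G.Adj (φ x) w → ¬ G.Adj (φ y) w)
    (hH : ¬ H.Colorable 2) : ¬ TwoCliqueColorable G := by
  rintro ⟨c, hc⟩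
  have hsep : ∀ {x y}, H.Adj x y → c (φ x) ≠ c (φ y) := fun {x y} hxy heq =>
    hc _ (isMaximalClique_pair (φ.map_adj hxy) (hφ x y hxy))
      ⟨_, by simp, _, by simp, (φ.map_adj hxy).ne⟩ (monochromaticOn_pair heq)
  exact hH (by simpa using (SimpleGraph.Coloring.mk (c ∘ φ) hsep).colorable)

namespace SimpleGraph

variable {V W : Type*}

/-- `G` with the vertices in the range of `f` isolated from the rest and carrying a copy of `H`. -/
def plant (G : SimpleGraph V) (f : W ↪ V) (H : SimpleGraph W) : SimpleGraph V where
  Adj u v := (G.Adj u v ∧ u ∉ Set.range f ∧ v ∉ Set.range f) ∨ (H.map f).Adj u v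
  symm := ⟨fun _ _ => by
    rintro (⟨h, hu, hv⟩ | h)
    exacts [Or.inl ⟨h.symm, hv, hu⟩, Or.inr h.symm]⟩
  loopless := ⟨fun _ => by
    rintro (⟨h, -⟩ | h)
    exacts [h.ne rfl, h.ne rfl]⟩

variable {G : SimpleGraph V} {f : W ↪ V} {H : SimpleGraph W}

theorem plant_adj {u v : V} : (G.plant f H).Adj u v ↔
    (G.Adj u v ∧ u ∉ Set.range f ∧ v ∉ Set.range f) ∨ (H.map f).Adj u v := Iff.rfl

theorem plant_adj_of_notMem {u v : V} (hu : u ∉ Set.range f) (hv : v ∉ Set.range f) :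
    (G.plant f H).Adj u v ↔ G.Adj u v := by
  rw [plant_adj, map_adj]
  refine ⟨?_, fun h => Or.inl ⟨h, hu, hv⟩⟩
  rintro (⟨h, -⟩ | ⟨x, -, -, rfl, -⟩)
  exacts [h, absurd ⟨x, rfl⟩ hu]

theorem plant_adj_apply_left {x : W} {v : V} :
    (G.plant f H).Adj (f x) v ↔ ∃ y, H.Adj x y ∧ f y = v := by
  rw [plant_adj, map_adj]
  refine ⟨?_, fun ⟨y, hxy, hy⟩ => Or.inr ⟨x, y, hxy, rfl, hy⟩⟩
  rintro (⟨-, hx, -⟩ | ⟨x', y, hxy, hx', hy⟩)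
  · exact absurd ⟨x, rfl⟩ hx
  · exact ⟨y, f.injective hx' ▸ hxy, hy⟩

theorem plant_adj_apply {x y : W} : (G.plant f H).Adj (f x) (f y) ↔ H.Adj x y := by
  simp [plant_adj_apply_left]

theorem not_twoCliqueColorable_plant (hH₃ : H.CliqueFree 3) (hH₂ : ¬ H.Colorable 2) :
    ¬ TwoCliqueColorable (G.plant f H) := by
  classical
  refine not_twoCliqueColorable_of_hom ⟨f, plant_adj_apply.mpr⟩
    (fun x y hxy w hxw hyw => ?_) hH₂
  obtain ⟨z, hxz, rfl⟩ := plant_adj_apply_left.mp hxw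
  exact hH₃ {x, y, z} (is3Clique_triple_iff.mpr ⟨hxy, hxz, plant_adj_apply.mp hyw⟩)

theorem cycleGraph_five_cliqueFree_three : (cycleGraph 5).CliqueFree 3 := by
  intro s hs
  obtain ⟨a, b, c, hab, hac, hbc, -⟩ := is3Clique_iff.mp hs
  revert a b c
  decide

theorem not_colorable_two_cycleGraph_of_odd {n : ℕ} (hn : 2 ≤ n) (hodd : Odd n) :
    ¬ (cycleGraph n).Colorable 2 := fun h => by
  have := chromaticNumber_cycleGraph_of_odd n hn hodd ▸ h.chromaticNumber_le
  norm_num at this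

end SimpleGraph

theorem satisfiesCond_plant {m : ℕ} {W : Type*} {G : SimpleGraph (Fin m)} {f : W ↪ Fin m}
    {H : SimpleGraph W} {c : (Fin m × Fin m) × Bool} (hu : c.1.1 ∉ Set.range f)
    (hv : c.1.2 ∉ Set.range f) (h : SatisfiesCond G c) : SatisfiesCond (G.plant f H) c := by
  unfold SatisfiesCond at h ⊢
  rwa [SimpleGraph.plant_adj_of_notMem hu hv]

theorem Finset.exists_card_le_two_mul_forall_mem {α ι : Type*} [DecidableEq α] [Fintype ι]
    (p : ι → α × α) :
    ∃ s : Finset α, s.card ≤ 2 * Fintype.card ι ∧ ∀ i, (p i).1 ∈ s ∧ (p i).2 ∈ s := by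
  refine ⟨univ.image (fun i => (p i).1) ∪ univ.image (fun i => (p i).2), ?_, fun i => by simp⟩
  calc _ ≤ (univ.image fun i => (p i).1).card + (univ.image fun i => (p i).2).card :=
        card_union_le _ _
    _ ≤ Fintype.card ι + Fintype.card ι := add_le_add card_image_le card_image_le
    _ = 2 * Fintype.card ι := (two_mul _).symm

theorem Finset.exists_embedding_fin_disjoint {V : Type*} [Fintype V] [DecidableEq V]
    (s : Finset V) {n : ℕ} (h : s.card + n ≤ Fintype.card V) :
    ∃ f : Fin n ↪ V, ∀ v ∈ s, v ∉ Set.range f := by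
  obtain ⟨g⟩ := Function.Embedding.nonempty_of_card_le (α := Fin n) (β := ↥(sᶜ))
    (by simp only [Fintype.card_fin, Fintype.card_coe, card_compl]; omega)
  exact ⟨g.trans (Function.Embedding.subtype _),
    fun v hv ⟨x, hx⟩ => mem_compl.mp (hx ▸ (g x).2) hv⟩

theorem twoCC_compl_universal_general (k m : ℕ) (hm : 2 * k + 5 ≤ m)
    (cond : Fin k → (Fin m × Fin m) × Bool)
    (hcons : ∃ G : SimpleGraph (Fin m), ∀ i, SatisfiesCond G (cond i)) :
    ∃ G : SimpleGraph (Fin m),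
      (∀ i, SatisfiesCond G (cond i)) ∧ ¬ TwoCliqueColorable G := by
  obtain ⟨G, hG⟩ := hcons
  obtain ⟨S, hScard, hS⟩ := Finset.exists_card_le_two_mul_forall_mem fun i => (cond i).1
  obtain ⟨f, hfS⟩ := S.exists_embedding_fin_disjoint (n := 5) (by simp at hScard ⊢; omega)
  refine ⟨G.plant f (SimpleGraph.cycleGraph 5), fun i => ?_, ?_⟩
  · exact satisfiesCond_plant (hfS _ (hS i).1) (hfS _ (hS i).2) (hG i)
  · exact SimpleGraph.not_twoCliqueColorable_plant SimpleGraph.cycleGraph_five_cliqueFree_three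
      (SimpleGraph.not_colorable_two_cycleGraph_of_odd (by norm_num) (by decide))

/-- (2CC)ᶜ is (2k+5, k)-universal: any consistent family of k signed edge
conditions on `Fin m` (m ≥ 2k+5) has a model that is NOT 2-clique-colorable. -/
theorem twoCC_compl_universal (k m : ℕ) (hk : 1 ≤ k) (hm : 2 * k + 5 ≤ m)
    (cond : Fin k → (Fin m × Fin m) × Bool)
    (hcons : ∃ G : SimpleGraph (Fin m), ∀ i, SatisfiesCond G (cond i)) :
    ∃ G : SimpleGraph (Fin m),
      (∀ i, SatisfiesCond G (cond i)) ∧ ¬ TwoCliqueColorable G :=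
  twoCC_compl_universal_general k m hm cond hcons
end

section
/- Let k ≥ 1 and m ≥ 2k+1 be natural numbers, and let F be a set of unordered pairs of distinct vertices of Fin m with at most k elements. Then the graph ⊤ \ F obtained from the complete graph on Fin m by deleting the edges in F is 2-clique-colorable. -/
/-- Deleting at most k edges (k ≥ 1) from the complete graph on at least
2k+1 vertices leaves a 2-clique-colorable graph. -/
theorem complete_deleteEdges_twoCliqueColorable (k m : ℕ) (hk : 1 ≤ k)
    (hm : 2 * k + 1 ≤ m) (F : Set (Sym2 (Fin m)))
    (hF : ∀ e ∈ F, ¬ e.IsDiag) (hcard : F.ncard ≤ k) :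
    TwoCliqueColorable ((⊤ : SimpleGraph (Fin m)).deleteEdges F) := by
  classical
  have hFfin : F.Finite := Set.toFinite F
  set FS : Finset (Sym2 (Fin m)) := hFfin.toFinset with hFS
  have hFScard : FS.card ≤ k := by
    rw [hFS, ← Set.ncard_eq_toFinset_card F hFfin]; exact hcard
  set B : Finset (Fin m) := FS.biUnion (fun e => Finset.univ.filter (· ∈ e)) with hBdef
  have hBcard : B.card ≤ 2 * k := by
    calc B.card ≤ ∑ e ∈ FS, (Finset.univ.filter (· ∈ e)).card :=
          Finset.card_biUnion_le
      _ ≤ ∑ _e ∈ FS, 2 := by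
          apply Finset.sum_le_sum
          intro e _
          induction e using Sym2.ind with
          | _ a b =>
            have hsub : Finset.univ.filter (· ∈ s(a, b)) ⊆ {a, b} := by
              intro x hx
              simp only [Finset.mem_filter, Sym2.mem_iff] at hx
              simp [hx.2]
            calc (Finset.univ.filter (· ∈ s(a, b))).card ≤ ({a, b} : Finset (Fin m)).card :=
                  Finset.card_le_card hsub
              _ ≤ 2 := Finset.card_insert_le _ _ |>.trans (by simp)
      _ = 2 * FS.card := by rw [Finset.sum_const, smul_eq_mul, mul_comm]
      _ ≤ 2 * k := by omega
  obtain ⟨v₀, hv₀⟩ : ∃ v₀ : Fin m, v₀ ∉ B := by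
    by_contra h
    push_neg at h
    have : (Finset.univ : Finset (Fin m)) ⊆ B := fun v _ => h v
    have := Finset.card_le_card this
    simp [Finset.card_univ] at this
    omega
  have hv₀' : ∀ e ∈ F, v₀ ∉ e := by
    intro e he hmem
    exact hv₀ (Finset.mem_biUnion.2 ⟨e, hFfin.mem_toFinset.2 he, by simp [hmem]⟩)
  refine ⟨fun v => decide (v = v₀), ?_⟩
  rintro s ⟨hclique, hmax⟩ ⟨u, hu, v, hv, huv⟩ hmono
  -- v₀ ∈ s
  have hv₀s : v₀ ∈ s := by
    have ht : ((⊤ : SimpleGraph (Fin m)).deleteEdges F).IsClique (insert v₀ s) := by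
      intro x hx y hy hxy
      rw [SimpleGraph.deleteEdges_adj]
      rcases hx with rfl | hx
      · rcases hy with rfl | hy
        · exact absurd rfl hxy
        · exact ⟨by simp [hxy], fun hmem => hv₀' _ hmem (by simp)⟩
      · rcases hy with rfl | hy
        · exact ⟨by simp [hxy], fun hmem => hv₀' _ hmem (by simp)⟩
        · simpa using hclique hx hy hxy
    have := hmax _ ht (Set.subset_insert _ _)
    rw [this]; exact Set.mem_insert _ _
  -- some vertex in s differs from v₀
  obtain ⟨w, hw, hwne⟩ : ∃ w ∈ s, w ≠ v₀ := by
    by_cases h : u = v₀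
    · exact ⟨v, hv, by rw [← h]; exact fun hh => huv hh.symm⟩
    · exact ⟨u, hu, h⟩
  have := hmono v₀ hv₀s w hw
  simp [hwne] at this
end

section
/- Let k ≥ 1 and m ≥ 2k+1 be natural numbers, let F be a nonempty set of unordered pairs of distinct vertices of Fin m with at most k elements, let G = ⊤ \ F be the complete graph on Fin m with the edges in F deleted, and let R be the set of vertices of Fin m that do not belong to any pair in F. Then every maximal clique of G contains a vertex in R and a vertex not in R. -/
/-!
Every vertex untouched by `F` is adjacent in `⊤ \ F` to all other vertices, so a maximal clique
must contain all of them; there is at least one because `F` touches at most `2 * |F| < m`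
vertices. Conversely, if a maximal clique consisted of untouched vertices only, any endpoint of
an edge of `F` would be adjacent to all of it and hence belong to it.
-/

theorem Sym2.ncard_setOf_mem_le {α : Type*} (z : Sym2 α) : {x | x ∈ z}.ncard ≤ 2 := by
  classical
  have hz : {x | x ∈ z} = (z.toFinset : Set α) := by ext; simp
  rw [hz, Set.ncard_coe_finset, Sym2.card_toFinset]
  split_ifs <;> omega

theorem ncard_setOf_exists_mem_le {α : Type*} {F : Set (Sym2 α)} (hF : F.Finite) :
    {x | ∃ e ∈ F, x ∈ e}.ncard ≤ 2 * F.ncard := by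
  have hunion : {x | ∃ e ∈ F, x ∈ e} = ⋃ e ∈ hF.toFinset, {x | x ∈ e} := by ext; simp
  calc {x | ∃ e ∈ F, x ∈ e}.ncard ≤ ∑ e ∈ hF.toFinset, {x | x ∈ e}.ncard :=
        hunion ▸ hF.toFinset.set_ncard_biUnion_le _
    _ ≤ hF.toFinset.card • 2 := Finset.sum_le_card_nsmul _ _ _ fun e _ ↦ e.ncard_setOf_mem_le
    _ = 2 * F.ncard := by rw [Set.ncard_eq_toFinset_card F hF, smul_eq_mul, mul_comm]

theorem setOf_forall_notMem_nonempty {α : Type*} [Finite α] {F : Set (Sym2 α)}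
    (h : 2 * F.ncard < Nat.card α) : {x | ∀ e ∈ F, x ∉ e}.Nonempty := by
  by_contra hempty
  have htouched : {x | ∃ e ∈ F, x ∈ e} = Set.univ := by
    ext x
    simpa using fun hx ↦ hempty ⟨x, hx⟩
  have := ncard_setOf_exists_mem_le (Set.toFinite F)
  rw [htouched, Set.ncard_univ] at this
  omega

theorem top_deleteEdges_adj_of_forall_notMem {V : Type*} {F : Set (Sym2 V)} {u v : V}
    (hu : ∀ e ∈ F, u ∉ e) (huv : u ≠ v) : ((⊤ : SimpleGraph V).deleteEdges F).Adj u v :=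
  SimpleGraph.deleteEdges_adj.mpr ⟨huv, fun huvF ↦ hu _ huvF (Sym2.mem_mk_left u v)⟩

theorem IsMaximalClique.mem_of_forall_adj {V : Type*} {G : SimpleGraph V} {s : Set V} {v : V}
    (hs : IsMaximalClique G s) (hv : ∀ x ∈ s, v ≠ x → G.Adj v x) : v ∈ s := by
  rw [hs.2 _ (SimpleGraph.isClique_insert.mpr ⟨hs.1, hv⟩) (Set.subset_insert v s)]
  exact Set.mem_insert v s

theorem maximalClique_meets_untouched_general (k m : ℕ)
    (hm : 2 * k + 1 ≤ m) (F : Set (Sym2 (Fin m)))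
    (hcard : F.ncard ≤ k) (hne : F.Nonempty) :
    ∀ s : Set (Fin m),
      IsMaximalClique ((⊤ : SimpleGraph (Fin m)).deleteEdges F) s →
        (∃ v ∈ s, v ∈ {x : Fin m | ∀ e ∈ F, x ∉ e}) ∧
        (∃ v ∈ s, v ∉ {x : Fin m | ∀ e ∈ F, x ∉ e}) := by
  intro s hs
  constructor
  · obtain ⟨r, hr⟩ := setOf_forall_notMem_nonempty (F := F) (by rw [Nat.card_fin]; omega)
    exact ⟨r, hs.mem_of_forall_adj fun x _ hrx ↦ top_deleteEdges_adj_of_forall_notMem hr hrx, hr⟩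
  · by_contra! hs_untouched
    obtain ⟨e, he⟩ := hne
    have ha : e.out.1 ∈ s := hs.mem_of_forall_adj fun x hx hax ↦
      (top_deleteEdges_adj_of_forall_notMem (hs_untouched x hx) hax.symm).symm
    exact hs_untouched _ ha e he (Sym2.out_fst_mem e)

/-- In the complete graph on ≥ 2k+1 vertices minus a nonempty set F of at
most k edges, every maximal clique meets both the set R of vertices untouched
by F and its complement. -/
theorem maximalClique_meets_untouched (k m : ℕ) (hk : 1 ≤ k)
    (hm : 2 * k + 1 ≤ m) (F : Set (Sym2 (Fin m)))
    (hF : ∀ e ∈ F, ¬ e.IsDiag) (hcard : F.ncard ≤ k) (hne : F.Nonempty) :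
    ∀ s : Set (Fin m),
      IsMaximalClique ((⊤ : SimpleGraph (Fin m)).deleteEdges F) s →
        (∃ v ∈ s, v ∈ {x : Fin m | ∀ e ∈ F, x ∉ e}) ∧
        (∃ v ∈ s, v ∉ {x : Fin m | ∀ e ∈ F, x ∉ e}) :=
  maximalClique_meets_untouched_general k m hm F hcard hne
end

section
/- Let G be a simple graph on a vertex type V and let f : Fin 5 → V be an injective map such that (1) for all i, j, f i and f j are adjacent in G if and only if j = i + 1 or i = j + 1 (addition modulo 5), and (2) no f i is adjacent in G to any vertex outside the range of f (so the image of f is a connected component of G isomorphic to the 5-cycle). Then G is not 2-clique-colorable. -/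
/-- A graph containing a 5-cycle as a connected component is not
2-clique-colorable. -/
theorem not_twoCliqueColorable_of_fiveCycle_component {V : Type*}
    (G : SimpleGraph V) (f : Fin 5 → V) (hf : Function.Injective f)
    (hadj : ∀ i j : Fin 5, G.Adj (f i) (f j) ↔ (j = i + 1 ∨ i = j + 1))
    (hcomp : ∀ (i : Fin 5) (v : V), v ∉ Set.range f → ¬ G.Adj (f i) v) :
    ¬ TwoCliqueColorable G := by
  rintro ⟨c, hc⟩
  have key : ∀ i : Fin 5, c (f i) ≠ c (f (i + 1)) := by
    intro i
    have hadj1 : G.Adj (f i) (f (i + 1)) := (hadj i (i + 1)).2 (Or.inl rfl)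
    have hmax : IsMaximalClique G {f i, f (i + 1)} := by
      constructor
      · intro x hx y hy hxy
        rcases hx with rfl | rfl <;> rcases hy with rfl | rfl <;>
          first
            | exact absurd rfl hxy
            | exact hadj1
            | exact hadj1.symm
      · intro t ht hsub
        apply Set.Subset.antisymm hsub
        intro v hv
        by_contra hvs
        have hv1 : v ≠ f i := fun h => hvs (by simp [h])
        have hv2 : v ≠ f (i + 1) := fun h => hvs (by simp [h])
        have a1 : G.Adj (f i) v := ht (hsub (by simp)) hv hv1.symm
        have a2 : G.Adj (f (i + 1)) v := ht (hsub (by simp)) hv hv2.symm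
        have hr : v ∈ Set.range f := by
          by_contra hr; exact hcomp i v hr a1
        obtain ⟨k, rfl⟩ := hr
        have h1 := (hadj i k).1 a1
        have h2 := (hadj (i + 1) k).1 a2
        have hk1 : k ≠ i := fun h => hv1 (by rw [h])
        have hk2 : k ≠ i + 1 := fun h => hv2 (by rw [h])
        have hik : i = k + 1 := h1.resolve_left hk2
        rcases h2 with h2 | h2
        · rw [h2] at hik
          have h3 : i + (1 + 1 + 1) = i + 0 := by
            rw [add_zero, ← add_assoc, ← add_assoc]; exact hik.symm
          have := add_left_cancel h3
          exact absurd this (by decide)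
        · exact hk1 (add_right_cancel h2).symm
    have hne : f i ≠ f (i + 1) := hadj1.ne
    intro heq
    apply hc _ hmax ⟨f i, by simp, f (i + 1), by simp, hne⟩
    intro u hu v hv
    rcases hu with rfl | rfl <;> rcases hv with rfl | rfl <;> simp [heq]
  have h0 := key 0
  have h1 := key 1
  have h2 := key 2
  have h3 := key 3
  have h4 := key 4
  have e0 : (0 : Fin 5) + 1 = 1 := by decide
  have e1 : (1 : Fin 5) + 1 = 2 := by decide
  have e2 : (2 : Fin 5) + 1 = 3 := by decide
  have e3 : (3 : Fin 5) + 1 = 4 := by decide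
  have e4 : (4 : Fin 5) + 1 = 0 := by decide
  rw [e0] at h0; rw [e1] at h1; rw [e2] at h2; rw [e3] at h3; rw [e4] at h4
  revert h0 h1 h2 h3 h4
  cases c (f 0) <;> cases c (f 1) <;> cases c (f 2) <;> cases c (f 3) <;>
    cases c (f 4) <;> decide
end

section
/- Let n be a natural number and let φ : (Fin n → Bool) → Bool be a Boolean function (representing a Boolean formula in the variables y_1, …, y_n). Then φ is unsatisfiable (i.e., φ y = false for every assignment y) if and only if there is exactly one pair (z, y) ∈ Bool × (Fin n → Bool) satisfying (z = true ∨ φ y = true) ∧ (∀ i, z = false ∨ y i = true); moreover in that case the unique satisfying pair assigns true to z and to every y_i. -/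
/-- φ is unsatisfiable iff the formula (z ∨ φ(y)) ∧ ⋀ᵢ (¬z ∨ yᵢ) has exactly
one satisfying assignment; in that case the unique assignment sets z and
every yᵢ to true. -/
theorem unsat_iff_uniqueExtension (n : ℕ) (φ : (Fin n → Bool) → Bool) :
    ((∀ y : Fin n → Bool, φ y = false) ↔
      ∃! p : Bool × (Fin n → Bool),
        (p.1 = true ∨ φ p.2 = true) ∧ (∀ i : Fin n, p.1 = false ∨ p.2 i = true)) ∧
    ((∀ y : Fin n → Bool, φ y = false) →
      ∀ p : Bool × (Fin n → Bool),
        ((p.1 = true ∨ φ p.2 = true) ∧ (∀ i : Fin n, p.1 = false ∨ p.2 i = true)) →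
          p.1 = true ∧ ∀ i : Fin n, p.2 i = true) := by
  have key : (∀ y : Fin n → Bool, φ y = false) →
      ∀ p : Bool × (Fin n → Bool),
        ((p.1 = true ∨ φ p.2 = true) ∧ (∀ i : Fin n, p.1 = false ∨ p.2 i = true)) →
          p.1 = true ∧ ∀ i : Fin n, p.2 i = true := by
    intro h p ⟨h1, h2⟩
    have hz : p.1 = true := by
      rcases h1 with h1 | h1
      · exact h1
      · simp [h p.2] at h1
    refine ⟨hz, fun i => ?_⟩
    rcases h2 i with h' | h'
    · simp [hz] at h'
    · exact h'
  refine ⟨⟨fun h => ?_, fun h => ?_⟩, key⟩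
  · refine ⟨(true, fun _ => true), ⟨Or.inl rfl, fun i => Or.inr rfl⟩, ?_⟩
    intro p hp
    obtain ⟨hz, hy⟩ := key h p hp
    exact Prod.ext hz (funext fun i => hy i)
  · intro y
    by_contra hy
    have hy' : φ y = true := by simpa using hy
    obtain ⟨p, hp, huniq⟩ := h
    have e1 := huniq (true, fun _ => true) ⟨Or.inl rfl, fun i => Or.inr rfl⟩
    have e2 := huniq (false, y) ⟨Or.inr hy', fun i => Or.inl rfl⟩
    rw [← e1] at e2
    exact absurd (congrArg Prod.fst e2) (by simp)
end

section
/- Every simple graph on a finite vertex type whose edge set has at most 4 elements is 2-clique-colorable. (Together with the previous fact, this expresses the paper's claim that the 5-cycle is a smallest graph, in both number of vertices and number of edges, that is not 2-clique-colorable.) -/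
/-! If `G` is acyclic it is bipartite, and a proper 2-colouring of `G` is a 2-clique-colouring,
since every clique with two vertices contains an edge. Otherwise `G` has a cycle, and with at
most four edges that cycle is a triangle or a 4-cycle. A 4-cycle uses up all the edges, so `G`
is again bipartite. A triangle `abc` leaves room for at most one further edge `e`; deleting `ab`
and `bc` leaves the forest `{e, ca}`, and a proper 2-colouring of that forest works for `G`: a
maximal clique inside `{a, b, c}` is the whole triangle and so contains `c` and `a`, and any
other maximal clique has an edge at a vertex outside the triangle, which survives the deletion. -/

namespace SimpleGraph

variable {V : Type*} {G : SimpleGraph V}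

lemma Walk.IsTrail.ncard_edgeSet_diff_add_length {u v : V} {p : G.Walk u v} (hp : p.IsTrail)
    (hfin : G.edgeSet.Finite) :
    (G.edgeSet \ {e | e ∈ p.edges}).ncard + p.length = G.edgeSet.ncard := by
  classical
  have hedges : {e | e ∈ p.edges} = (p.edges.toFinset : Set (Sym2 V)) := by ext; simp
  have hsub : {e | e ∈ p.edges} ⊆ G.edgeSet := fun e he => p.edges_subset_edgeSet he
  rw [← Set.ncard_sdiff_add_ncard_of_subset hsub hfin, hedges, Set.ncard_coe_finset,
    List.toFinset_card_of_nodup hp.edges_nodup, p.length_edges]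

lemma isAcyclic_of_edgeSet_subset_pair {e₁ e₂ : Sym2 V} (h : G.edgeSet ⊆ {e₁, e₂}) :
    G.IsAcyclic := by
  intro u p hp
  have hlen := hp.isTrail.ncard_edgeSet_diff_add_length ((Set.toFinite _).subset h)
  have hcard : G.edgeSet.ncard ≤ 2 :=
    (Set.ncard_le_ncard h).trans ((Set.ncard_insert_le e₁ {e₂}).trans (by simp))
  have := hp.three_le_length
  omega

lemma Walk.exists_adj_of_length_eq_three {u : V} :
    ∀ p : G.Walk u u, p.length = 3 →
      ∃ b c, G.Adj u b ∧ G.Adj b c ∧ G.Adj c u ∧ p.edges = [s(u, b), s(b, c), s(c, u)]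
  | .cons h₁ (.cons h₂ (.cons h₃ .nil)), _ => ⟨_, _, h₁, h₂, h₃, rfl⟩

lemma Walk.exists_adj_of_length_eq_four {u : V} :
    ∀ p : G.Walk u u, p.length = 4 →
      ∃ b c d, G.Adj u b ∧ G.Adj b c ∧ G.Adj c d ∧ G.Adj d u ∧
        p.edges = [s(u, b), s(b, c), s(c, d), s(d, u)]
  | .cons h₁ (.cons h₂ (.cons h₃ (.cons h₄ .nil))), _ => ⟨_, _, _, h₁, h₂, h₃, h₄, rfl⟩

lemma isBipartite_of_edgeSet_subset_square {a b c d : V} (hab : a ≠ b) (hbc : b ≠ c)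
    (hcd : c ≠ d) (hda : d ≠ a) (hG : G.edgeSet ⊆ {s(a, b), s(b, c), s(c, d), s(d, a)}) :
    G.IsBipartite := by
  refine IsBipartiteWith.isBipartite (s := {a, c}) (t := {b, d}) ⟨?_, fun v w hvw => ?_⟩
  · simp [Set.disjoint_left, hab, hbc.symm, hcd, hda.symm]
  · have := hG (G.mem_edgeSet.mpr hvw)
    simp only [Set.mem_insert_iff, Set.mem_singleton_iff, Sym2.eq_iff] at this
    rcases this with h | h | h | h <;> rcases h with ⟨rfl, rfl⟩ | ⟨rfl, rfl⟩ <;> simp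

end SimpleGraph

section

variable {V : Type*} {G : SimpleGraph V}

open SimpleGraph

theorem twoCliqueColorable_of_isBipartite_of_forall_isMaximalClique {H : SimpleGraph V}
    (hH : H.IsBipartite)
    (h : ∀ s, IsMaximalClique G s → (∃ u ∈ s, ∃ v ∈ s, u ≠ v) → ∃ u ∈ s, ∃ v ∈ s, H.Adj u v) :
    TwoCliqueColorable G := by
  let c : H.Coloring Bool := hH.toColoring (by simp)
  refine ⟨c, fun s hs hne hmono => ?_⟩
  obtain ⟨u, hu, v, hv, huv⟩ := h s hs hne
  exact c.valid huv (hmono u hu v hv)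

theorem twoCliqueColorable_of_isBipartite (hG : G.IsBipartite) : TwoCliqueColorable G :=
  twoCliqueColorable_of_isBipartite_of_forall_isMaximalClique hG
    fun _ hs ⟨u, hu, v, hv, huv⟩ => ⟨u, hu, v, hv, hs.1 hu hv huv⟩

theorem twoCliqueColorable_of_edgeSet_subset_insert_triangle {a b c : V} {e : Sym2 V}
    (hab : G.Adj a b) (hbc : G.Adj b c) (hca : G.Adj c a)
    (hG : G.edgeSet ⊆ {e, s(a, b), s(b, c), s(c, a)}) : TwoCliqueColorable G := by
  set H := G.deleteEdges {s(a, b), s(b, c)}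
  refine twoCliqueColorable_of_isBipartite_of_forall_isMaximalClique (H := H) ?_ ?_
  · refine (isAcyclic_of_edgeSet_subset_pair (e₁ := e) (e₂ := s(c, a)) ?_).isBipartite
    rw [edgeSet_deleteEdges]
    rintro x ⟨hx, hx'⟩
    simp only [Set.mem_insert_iff, Set.mem_singleton_iff, not_or] at hx'
    simpa [hx'] using hG hx
  · rintro s ⟨hs, hmax⟩ ⟨x, hx, y, hy, hxy⟩
    by_cases hsub : s ⊆ {a, b, c}
    · have htri : G.IsClique {a, b, c} := by
        simp [isClique_insert, hab, hbc, hca.symm, hab.ne, hbc.ne, hca.ne']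
      have hs_eq : s = {a, b, c} := hmax _ htri hsub
      refine ⟨c, by simp [hs_eq], a, by simp [hs_eq], ?_⟩
      simp [H, hca, hab.ne, hbc.ne']
    · obtain ⟨w, hw, hw'⟩ := Set.not_subset.mp hsub
      obtain ⟨z, hz, hwz⟩ : ∃ z ∈ s, w ≠ z := by
        by_cases hwx : w = x
        · exact ⟨y, hy, hwx ▸ hxy⟩
        · exact ⟨x, hx, hwx⟩
      refine ⟨w, hw, z, hz, ?_⟩
      simp only [Set.mem_insert_iff, Set.mem_singleton_iff, not_or] at hw'
      simp [H, hs hw hz hwz, hw']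

end

/-- Every graph with at most 4 edges (on a finite vertex type) is
2-clique-colorable. -/
theorem twoCliqueColorable_of_edges_le_four {V : Type*} [Fintype V]
    (G : SimpleGraph V) (hE : G.edgeSet.ncard ≤ 4) :
    TwoCliqueColorable G := by
  by_cases hG : G.IsAcyclic
  · exact twoCliqueColorable_of_isBipartite hG.isBipartite
  obtain ⟨u, p, hp⟩ : ∃ u, ∃ p : G.Walk u u, p.IsCycle := by
    simpa [SimpleGraph.IsAcyclic] using hG
  have hcount := hp.isTrail.ncard_edgeSet_diff_add_length G.edgeSet.toFinite
  have h3 := hp.three_le_length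
  obtain hlen | hlen : p.length = 3 ∨ p.length = 4 := by omega
  · obtain ⟨b, c, hub, hbc, hcu, hedges⟩ := p.exists_adj_of_length_eq_three hlen
    have : Nonempty (Sym2 V) := ⟨s(u, u)⟩
    obtain ⟨e, he⟩ := (Set.ncard_le_one_iff_subset_singleton (Set.toFinite _)).mp
      (show (G.edgeSet \ {e | e ∈ p.edges}).ncard ≤ 1 by omega)
    refine twoCliqueColorable_of_edgeSet_subset_insert_triangle hub hbc hcu (e := e)
      fun x hx => ?_
    simpa [hedges] using Set.sdiff_subset_iff.mp he hx
  · obtain ⟨b, c, d, hub, hbc, hcd, hdu, hedges⟩ := p.exists_adj_of_length_eq_four hlen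
    refine twoCliqueColorable_of_isBipartite
      (SimpleGraph.isBipartite_of_edgeSet_subset_square hub.ne hbc.ne hcd.ne hdu.ne ?_)
    have hsub : G.edgeSet ⊆ {e | e ∈ p.edges} :=
      Set.sdiff_eq_empty.mp ((Set.ncard_eq_zero (Set.toFinite _)).mp (by omega))
    intro x hx
    simpa [hedges] using hsub hx
end
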